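/- arXiv:1505.00572 — 2 statements merged into one kernel-verified Lean document; each statement's English description precedes it below -/
import Mathlib

section
/- Let S be a set of prime numbers, let G be an abelian group, and let H be a subgroup of G such that the quotient group G/H is isomorphic to ℚ_S. If H is S-divisible, then the quotient homomorphism π : G → G/H admits a group-homomorphism section (i.e. the extension splits), and consequently G is isomorphic to the direct sum H ⊕ (G/H). -/
open scoped TensorProduct

/-- `ℚ_S`: the additive subgroup of `ℚ` of rationals whose lowest-terms denominator
has all of its prime factors in `S`. -/
def ratSubgroup (S : Set ℕ) : AddSubgroup ℚ where
  carrier := {q : ℚ | ∀ p : ℕ, p.Prime → p ∣ q.den → p ∈ S}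
  zero_mem' := by
    intro p hp hdvd
    rw [Rat.den_zero, Nat.dvd_one] at hdvd
    exact absurd (hdvd ▸ hp) Nat.not_prime_one
  add_mem' := by
    intro a b ha hb p hp hdvd
    rcases (Nat.Prime.dvd_mul hp).mp (hdvd.trans (Rat.add_den_dvd a b)) with h | h
    · exact ha p hp h
    · exact hb p hp h
  neg_mem' := by
    intro a ha p hp hdvd
    rw [Rat.den_neg_eq_den] at hdvd
    exact ha p hp hdvd

theorem one_mem_ratSubgroup (S : Set ℕ) : (1 : ℚ) ∈ ratSubgroup S := by
  intro p hp hdvd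
  rw [Rat.den_one, Nat.dvd_one] at hdvd
  exact absurd (hdvd ▸ hp) Nat.not_prime_one

/-- `ℚ_S/ℤ`: the quotient of `ℚ_S` by its subgroup of integers (the multiples of `1`). -/
def ratSubgroupModZ (S : Set ℕ) : Type :=
  ratSubgroup S ⧸ AddSubgroup.zmultiples (⟨1, one_mem_ratSubgroup S⟩ : ratSubgroup S)

noncomputable instance (S : Set ℕ) : AddCommGroup (ratSubgroupModZ S) :=
  inferInstanceAs (AddCommGroup (ratSubgroup S ⧸ AddSubgroup.zmultiples
    (⟨1, one_mem_ratSubgroup S⟩ : ratSubgroup S)))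


open Classical in
/-- Auxiliary sequence: hits every prime of `S` infinitely often. -/
noncomputable def rsC (S : Set ℕ) (j : ℕ) : ℕ :=
  if (Nat.unpair j).1 ∈ S ∧ ((Nat.unpair j).1).Prime then (Nat.unpair j).1 else 1

noncomputable def rsM (S : Set ℕ) : ℕ → ℕ
  | 0 => 1
  | k+1 => rsM S k * rsC S k

theorem rsC_pos (S : Set ℕ) (j : ℕ) : 0 < rsC S j := by
  unfold rsC; split
  · next h => exact h.2.pos
  · exact one_pos

theorem rsC_cases (S : Set ℕ) (j : ℕ) :
    rsC S j = 1 ∨ (rsC S j ∈ S ∧ (rsC S j).Prime) := by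
  unfold rsC; split
  · exact Or.inr (by assumption)
  · exact Or.inl rfl

theorem rsC_hits (S : Set ℕ) {p : ℕ} (hpS : p ∈ S) (hp : p.Prime) (k : ℕ) :
    ∃ j, k ≤ j ∧ rsC S j = p := by
  refine ⟨Nat.pair p k, Nat.right_le_pair p k, ?_⟩
  unfold rsC
  rw [Nat.unpair_pair]
  simp [hpS, hp]

theorem rsM_pos (S : Set ℕ) (k : ℕ) : 0 < rsM S k := by
  induction k with
  | zero => exact one_pos
  | succ k ih => exact Nat.mul_pos ih (rsC_pos S k)

theorem rsM_mem (S : Set ℕ) (k : ℕ) {p : ℕ} (hp : p.Prime) (hdvd : p ∣ rsM S k) :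
    p ∈ S := by
  induction k with
  | zero =>
    rw [show rsM S 0 = 1 from rfl, Nat.dvd_one] at hdvd
    exact absurd (hdvd ▸ hp) Nat.not_prime_one
  | succ k ih =>
    rw [show rsM S (k+1) = rsM S k * rsC S k from rfl] at hdvd
    rcases (Nat.Prime.dvd_mul hp).mp hdvd with h | h
    · exact ih h
    · rcases rsC_cases S k with h1 | ⟨hS, hpr⟩
      · rw [h1, Nat.dvd_one] at h
        exact absurd (h ▸ hp) Nat.not_prime_one
      · rwa [(Nat.prime_dvd_prime_iff_eq hp hpr).mp h]

theorem rsM_dvd (S : Set ℕ) {k k' : ℕ} (h : k ≤ k') : rsM S k ∣ rsM S k' := by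
  induction k' with
  | zero => exact Nat.le_zero.mp h ▸ dvd_rfl
  | succ k' ih =>
    rcases Nat.lt_or_ge k (k'+1) with h' | h'
    · exact (ih (Nat.lt_succ_iff.mp h')).trans ⟨rsC S k', rfl⟩
    · rw [Nat.le_antisymm h h']

theorem rsM_denom (S : Set ℕ) : ∀ d : ℕ, 0 < d →
    (∀ p : ℕ, p.Prime → p ∣ d → p ∈ S) → ∃ k, d ∣ rsM S k := by
  intro d
  induction d using Nat.strong_induction_on with
  | _ d ih =>
    intro hd hfac
    rcases eq_or_lt_of_le (show 1 ≤ d from hd) with h1 | h1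
    · exact ⟨0, h1 ▸ dvd_rfl⟩
      -- d = 1
    · have hp : d.minFac.Prime := Nat.minFac_prime (by omega)
      have hpd : d.minFac ∣ d := Nat.minFac_dvd d
      have hpS : d.minFac ∈ S := hfac _ hp hpd
      have hlt : d / d.minFac < d := Nat.div_lt_self hd hp.one_lt
      have hpos : 0 < d / d.minFac := Nat.div_pos (Nat.minFac_le hd) hp.pos
      obtain ⟨k, hk⟩ := ih _ hlt hpos (fun p hp' hdvd =>
        hfac p hp' (hdvd.trans (Nat.div_dvd_of_dvd hpd)))
      obtain ⟨j, hkj, hj⟩ := rsC_hits S hpS hp k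
      refine ⟨j + 1, ?_⟩
      have : d = (d / d.minFac) * d.minFac := (Nat.div_mul_cancel hpd).symm
      rw [this, show rsM S (j+1) = rsM S j * rsC S j from rfl, hj]
      exact Nat.mul_dvd_mul ((hk.trans (rsM_dvd S hkj))) dvd_rfl

-- integer lemma
theorem rat_mul_int {q : ℚ} {n : ℕ} (h : q.den ∣ n) :
    q * (n : ℚ) = ((q.num * (n / q.den : ℕ) : ℤ) : ℚ) := by
  obtain ⟨t, ht⟩ := h
  have hden : (q.den : ℚ) ≠ 0 := Nat.cast_ne_zero.mpr q.den_nz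
  have hq : q * (q.den : ℚ) = (q.num : ℚ) :=
    ((div_eq_iff hden).mp (Rat.num_div_den q)).symm
  subst ht
  rw [Nat.mul_div_cancel_left t q.pos]
  push_cast
  rw [← mul_assoc, hq]

theorem rat_den_one {q : ℚ} {n : ℕ} (h : q.den ∣ n) : (q * (n:ℚ)).den = 1 := by
  rw [rat_mul_int h]; exact Rat.den_intCast _

theorem rat_num_cast {q : ℚ} {n : ℕ} (h : q.den ∣ n) :
    (((q * (n:ℚ)).num : ℤ) : ℚ) = q * (n:ℚ) :=
  Rat.coe_int_num_of_den_eq_one (rat_den_one h)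

theorem ratSubgroup_section (S : Set ℕ) (G : Type) [AddCommGroup G]
    (e : G →+ ratSubgroup S) (hsur : Function.Surjective e)
    (hdiv : ∀ p ∈ S, ∀ a : G, e a = 0 → ∃ b : G, e b = 0 ∧ p • b = a) :
    ∃ s : ratSubgroup S →+ G, ∀ q, e (s q) = q := by
  classical
  -- the elements 1/(rsM S k) of ℚ_S
  have humem : ∀ k, ((rsM S k : ℚ))⁻¹ ∈ ratSubgroup S := by
    intro k p hp hd
    rw [Rat.inv_natCast_den_of_pos (rsM_pos S k)] at hd
    exact rsM_mem S k hp hd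
  set u : ℕ → ratSubgroup S := fun k => ⟨((rsM S k : ℚ))⁻¹, humem k⟩ with hu
  have hmne : ∀ k, ((rsM S k : ℚ)) ≠ 0 := fun k =>
    Nat.cast_ne_zero.mpr (rsM_pos S k).ne'
  have hcu : ∀ k, rsC S k • u (k + 1) = u k := by
    intro k
    apply Subtype.ext
    show (rsC S k) • ((rsM S (k+1) : ℚ))⁻¹ = ((rsM S k : ℚ))⁻¹
    have hc : ((rsC S k : ℚ)) ≠ 0 := Nat.cast_ne_zero.mpr (rsC_pos S k).ne'
    rw [nsmul_eq_mul, show rsM S (k+1) = rsM S k * rsC S k from rfl]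
    push_cast
    rw [mul_inv, mul_comm ((rsM S k : ℚ))⁻¹ ((rsC S k : ℚ))⁻¹, ← mul_assoc,
      mul_inv_cancel₀ hc, one_mul]
  -- step existence
  have step : ∀ k, ∀ g : G, e g = u k →
      ∃ g' : G, e g' = u (k + 1) ∧ rsC S k • g' = g := by
    intro k g hg
    obtain ⟨y, hy⟩ := hsur (u (k + 1))
    have hker : e (rsC S k • y - g) = 0 := by
      rw [map_sub, map_nsmul, hy, hg, hcu k, sub_self]
    rcases rsC_cases S k with h1 | ⟨hS, hpr⟩
    · refine ⟨g, ?_, by rw [h1, one_smul]⟩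
      have huu : u (k + 1) = u k := by rw [← hcu k, h1, one_smul]
      rw [huu]; exact hg
    · obtain ⟨b, hb0, hb⟩ := hdiv _ hS _ hker
      refine ⟨y - b, ?_, ?_⟩
      · rw [map_sub, hy, hb0, sub_zero]
      · rw [smul_sub, hb]; abel
  obtain ⟨x0, hx0⟩ := hsur (u 0)
  choose st hst1 hst2 using step
  -- the compatible sequence of lifts
  let F : ∀ k, {g : G // e g = u k} := fun k =>
    Nat.rec ⟨x0, hx0⟩ (fun k p => ⟨st k p.1 p.2, hst1 k p.1 p.2⟩) k
  set x : ℕ → G := fun k => (F k).1 with hxdef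
  have hex : ∀ k, e (x k) = u k := fun k => (F k).2
  have hcx : ∀ k, rsC S k • x (k + 1) = x k := fun k => hst2 k (F k).1 (F k).2
  -- multiplicative compatibility
  have hcomp : ∀ k k', k ≤ k' → ∃ t : ℕ, rsM S k' = rsM S k * t ∧ t • x k' = x k := by
    intro k k' h
    induction k', h using Nat.le_induction with
    | base => exact ⟨1, (mul_one _).symm, one_smul _ _⟩
    | succ k' hk ih =>
      obtain ⟨t, ht, hx⟩ := ih
      refine ⟨t * rsC S k', ?_, ?_⟩
      · rw [show rsM S (k'+1) = rsM S k' * rsC S k' from rfl, ht, mul_assoc]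
      · rw [mul_smul, hcx k', hx]
  -- the candidate values
  set val : ℚ → ℕ → G := fun q k => (q * (rsM S k : ℚ)).num • x k with hval
  have hval_indep : ∀ (q : ℚ) (k k' : ℕ), k ≤ k' → q.den ∣ rsM S k →
      val q k' = val q k := by
    intro q k k' hkk hdk
    obtain ⟨t, ht, hx⟩ := hcomp k k' hkk
    have hdk' : q.den ∣ rsM S k' := hdk.trans (rsM_dvd S hkk)
    have key : q * (rsM S k' : ℚ) = (((q * (rsM S k : ℚ)).num * t : ℤ) : ℚ) := by
      have h1 : (((q * (rsM S k : ℚ)).num : ℤ) : ℚ) = q * (rsM S k : ℚ) :=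
        rat_num_cast hdk
      push_cast
      rw [h1, ht]
      push_cast
      ring
    have hnum : (q * (rsM S k' : ℚ)).num = (q * (rsM S k : ℚ)).num * t := by
      rw [key, Rat.num_intCast]
    show (q * (rsM S k' : ℚ)).num • x k' = (q * (rsM S k : ℚ)).num • x k
    rw [hnum, mul_smul, natCast_zsmul, hx]
  have hval_eq : ∀ (q : ℚ) (k k' : ℕ), q.den ∣ rsM S k → q.den ∣ rsM S k' →
      val q k = val q k' := by
    intro q k k' h h'
    rw [← hval_indep q k (max k k') (le_max_left _ _) h,
        ← hval_indep q k' (max k k') (le_max_right _ _) h']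
  -- the denominators are attained
  have hkex : ∀ q : ratSubgroup S, ∃ k, (q : ℚ).den ∣ rsM S k := by
    intro q
    exact rsM_denom S (q : ℚ).den (q : ℚ).pos (fun p hp hd => q.2 p hp hd)
  -- the section as a function
  set sf : ratSubgroup S → G := fun q => val (q : ℚ) (hkex q).choose with hsf
  have hsf_eq : ∀ (q : ratSubgroup S) (k : ℕ), (q : ℚ).den ∣ rsM S k →
      sf q = val (q : ℚ) k := fun q k hk => hval_eq _ _ _ (hkex q).choose_spec hk
  -- additivity
  have hadd : ∀ a b : ratSubgroup S, sf (a + b) = sf a + sf b := by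
    intro a b
    have hd : ∀ p : ℕ, p.Prime → p ∣ (a : ℚ).den * (b : ℚ).den → p ∈ S := by
      intro p hp hdvd
      rcases hp.dvd_mul.mp hdvd with h | h
      · exact a.2 p hp h
      · exact b.2 p hp h
    obtain ⟨K, hK⟩ := rsM_denom S _ (Nat.mul_pos (a : ℚ).pos (b : ℚ).pos) hd
    have hKa : (a : ℚ).den ∣ rsM S K := (Dvd.intro _ rfl).trans hK
    have hKb : (b : ℚ).den ∣ rsM S K := (Dvd.intro_left _ rfl).trans hK
    have hKab : ((a : ℚ) + (b : ℚ)).den ∣ rsM S K := (Rat.add_den_dvd _ _).trans hK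
    rw [hsf_eq (a + b) K hKab, hsf_eq a K hKa, hsf_eq b K hKb]
    have hnum : (((a : ℚ) + (b : ℚ)) * (rsM S K : ℚ)).num =
        ((a : ℚ) * (rsM S K : ℚ)).num + ((b : ℚ) * (rsM S K : ℚ)).num := by
      have : ((a : ℚ) + (b : ℚ)) * (rsM S K : ℚ) =
          ((((a : ℚ) * (rsM S K : ℚ)).num + ((b : ℚ) * (rsM S K : ℚ)).num : ℤ) : ℚ) := by
        push_cast
        rw [rat_num_cast hKa, rat_num_cast hKb]
        ring
      rw [this, Rat.num_intCast]
    show val ((a : ℚ) + (b : ℚ)) K = val (a : ℚ) K + val (b : ℚ) K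
    rw [hval]
    simp only
    rw [hnum, add_smul]
  refine ⟨AddMonoidHom.mk' sf hadd, ?_⟩
  intro q
  obtain ⟨K, hK⟩ := hkex q
  show e (sf q) = q
  rw [hsf_eq q K hK]
  show e (((q : ℚ) * (rsM S K : ℚ)).num • x K) = q
  rw [map_zsmul, hex K]
  apply Subtype.ext
  show (((q : ℚ) * (rsM S K : ℚ)).num) • ((rsM S K : ℚ))⁻¹ = (q : ℚ)
  rw [zsmul_eq_mul, rat_num_cast hK, mul_assoc, mul_inv_cancel₀ (hmne K), mul_one]

/-- If `H ≤ G` with `G/H ≅ ℚ_S` and `H` is `S`-divisible, then the quotient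
map splits and `G ≅ H ⊕ G/H`. -/
theorem splitting_of_quotient_iso_ratSubgroup
    (S : Set ℕ) (hS : ∀ p ∈ S, p.Prime)
    (G : Type) [AddCommGroup G] (H : AddSubgroup G)
    (hiso : Nonempty ((G ⧸ H) ≃+ ratSubgroup S))
    (hdiv : ∀ p ∈ S, ∀ a : H, ∃ b : H, p • b = a) :
    (∃ s : (G ⧸ H) →+ G,
        (QuotientAddGroup.mk' H).comp s = AddMonoidHom.id (G ⧸ H)) ∧
      Nonempty (G ≃+ H × (G ⧸ H)) := by
  classical
  obtain ⟨φ⟩ := hiso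
  set π : G →+ G ⧸ H := QuotientAddGroup.mk' H with hπ
  set e : G →+ ratSubgroup S := φ.toAddMonoidHom.comp π with he
  have hsur : Function.Surjective e :=
    φ.surjective.comp (QuotientAddGroup.mk'_surjective H)
  have hπ0 : ∀ g : G, π g = 0 ↔ g ∈ H := fun g => QuotientAddGroup.eq_zero_iff g
  have hker : ∀ g : G, e g = 0 ↔ g ∈ H := by
    intro g
    rw [← hπ0 g]
    constructor
    · intro h
      have h2 : φ (π g) = φ 0 := by rw [map_zero]; exact h
      exact φ.injective h2
    · intro h
      show φ (π g) = 0
      rw [h, map_zero]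
  have hdiv' : ∀ p ∈ S, ∀ a : G, e a = 0 → ∃ b : G, e b = 0 ∧ p • b = a := by
    intro p hp a ha
    obtain ⟨b, hb⟩ := hdiv p hp ⟨a, (hker a).mp ha⟩
    refine ⟨(b : G), (hker (b : G)).mpr b.2, ?_⟩
    exact congrArg Subtype.val hb
  obtain ⟨s, hs⟩ := ratSubgroup_section S G e hsur hdiv'
  set σ : (G ⧸ H) →+ G := s.comp φ.toAddMonoidHom with hσ
  have hsec : ∀ q : G ⧸ H, π (σ q) = q := by
    intro q
    apply φ.injective
    exact hs (φ q)
  have hmem : ∀ g : G, g - σ (π g) ∈ H := by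
    intro g
    rw [← hπ0, map_sub, hsec, sub_self]
  constructor
  · exact ⟨σ, by ext q; exact hsec q⟩
  · refine ⟨{
      toFun := fun g => (⟨g - σ (π g), hmem g⟩, π g),
      invFun := fun p => (p.1 : G) + σ p.2,
      left_inv := fun g => by simp,
      right_inv := fun p => by
        have hq : π ((p.1 : G) + σ p.2) = p.2 := by
          rw [map_add, hsec, (hπ0 (p.1 : G)).mpr p.1.2, zero_add]
        refine Prod.ext ?_ ?_
        · apply Subtype.ext
          show (p.1 : G) + σ p.2 - σ (π ((p.1 : G) + σ p.2)) = (p.1 : G)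
          rw [hq, add_sub_cancel_right]
        · exact hq,
      map_add' := fun g₁ g₂ => by
        refine Prod.ext ?_ ?_
        · apply Subtype.ext
          show g₁ + g₂ - σ (π (g₁ + g₂)) = (g₁ - σ (π g₁)) + (g₂ - σ (π g₂))
          rw [map_add, map_add]
          abel
        · exact map_add π g₁ g₂ }⟩
end

section
/- Let S be a set of prime numbers, let G be an abelian group, and let H be a subgroup of G such that the quotient group G/H is isomorphic to ℚ_S/ℤ. If H is S-divisible, then the quotient homomorphism π : G → G/H admits a group-homomorphism section (i.e. the extension splits), and consequently G is isomorphic to the direct sum H ⊕ (G/H). -/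
open scoped TensorProduct

/-! Every element of `ℚ_S/ℤ` has an order whose prime factors lie in `S`, so `H` is divisible by
the order of every element of `G ⧸ H`. Zorn's lemma gives a maximal partial section, and it is
total: if it is defined on `K` and `m₀` is the order of `q` modulo `K`, lifting `q` to `g` with
`m₀ • g` equal to the chosen lift of `m₀ • q` only requires dividing an element of `H` by `m₀`.
A section then splits `G` as `H × (G ⧸ H)`. -/

open QuotientAddGroup

theorem nsmul_surjective_of_primeFactors_subset {A : Type*} [AddMonoid A] {S : Set ℕ}
    (hS : ∀ p ∈ S, Function.Surjective fun a : A => p • a) {m : ℕ} (hm : m ≠ 0)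
    (hmS : ↑m.primeFactors ⊆ S) : Function.Surjective fun a : A => m • a := by
  induction m using Nat.recOnMul with
  | zero => exact absurd rfl hm
  | one => exact fun a => ⟨a, one_nsmul a⟩
  | prime p hp => exact hS p (hmS (by simp [hp.primeFactors]))
  | mul a b iha ihb =>
    obtain ⟨ha, hb⟩ := mul_ne_zero_iff.mp hm
    rw [Nat.primeFactors_mul ha hb, Finset.coe_union, Set.union_subset_iff] at hmS
    simpa only [Function.comp_def, ← mul_nsmul'] using (iha ha hmS.1).comp (ihb hb hmS.2)

theorem ratSubgroupModZ.exists_nsmul_eq_zero (S : Set ℕ) (y : ratSubgroupModZ S) :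
    ∃ m : ℕ, m ≠ 0 ∧ m • y = 0 ∧ ↑m.primeFactors ⊆ S := by
  obtain ⟨x, rfl⟩ := mk_surjective
    (y : ratSubgroup S ⧸ AddSubgroup.zmultiples (⟨1, one_mem_ratSubgroup S⟩ : ratSubgroup S))
  refine ⟨(x : ℚ).den, (x : ℚ).den_ne_zero, ?_, fun p hp => ?_⟩
  · refine (eq_zero_iff _).mpr ⟨(x : ℚ).num, Subtype.ext ?_⟩
    simp [Rat.den_mul_eq_num]
  · exact x.2 p (Nat.prime_of_mem_primeFactors hp) (Nat.dvd_of_mem_primeFactors hp)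

theorem AddSubgroup.exists_dvd_and_zsmul_mem_iff {A : Type*} [AddCommGroup A] (K : AddSubgroup A)
    {q : A} {m : ℕ} (hmq : m • q = 0) :
    ∃ m₀ : ℕ, m₀ ∣ m ∧ ∀ t : ℤ, t • q ∈ K ↔ (m₀ : ℤ) ∣ t := by
  obtain ⟨a, ha⟩ := Int.subgroup_cyclic (K.comap (zmultiplesHom A q))
  have hmem : ∀ t : ℤ, t • q ∈ K ↔ (a.natAbs : ℤ) ∣ t := fun t => by
    rw [Int.natAbs_dvd, ← Int.mem_zmultiples_iff, AddSubgroup.zmultiples_eq_closure, ← ha]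
    rfl
  refine ⟨a.natAbs, Int.natCast_dvd_natCast.mp ((hmem m).mp ?_), hmem⟩
  simp [hmq]

variable {G : Type*} [AddCommGroup G] {H : AddSubgroup G}

theorem QuotientAddGroup.exists_mk_eq_and_nsmul_eq {q : G ⧸ H} {x : G} {m : ℕ}
    (hx : (x : G ⧸ H) = m • q) (hdiv : Function.Surjective fun b : H => m • b) :
    ∃ g : G, (g : G ⧸ H) = q ∧ m • g = x := by
  obtain ⟨g, rfl⟩ := mk_surjective q
  have hgx : m • g - x ∈ H := by
    rw [← eq_zero_iff, mk_sub, hx, mk_nsmul, sub_self]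
  obtain ⟨b, hb⟩ := hdiv ⟨_, hgx⟩
  refine ⟨g - b, ?_, ?_⟩
  · simp [(eq_zero_iff _).mpr b.2]
  · rw [smul_sub, ← AddSubgroup.coe_nsmul, show m • b = ⟨_, hgx⟩ from hb]
    exact sub_sub_cancel _ _

/-- `L` is the graph of a homomorphism from a subgroup of `G ⧸ H` to `G` lifting the inclusion. -/
def IsPartialSectionGraph (L : AddSubgroup ((G ⧸ H) × G)) : Prop :=
  (∀ x ∈ L, (x.2 : G ⧸ H) = x.1) ∧ ∀ g : G, ((0 : G ⧸ H), g) ∈ L → g = 0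

namespace IsPartialSectionGraph

variable {L : AddSubgroup ((G ⧸ H) × G)}

theorem bot : IsPartialSectionGraph (⊥ : AddSubgroup ((G ⧸ H) × G)) :=
  ⟨fun x hx => by simp [(AddSubgroup.mem_bot.mp hx)], fun g hg => by simpa using hg⟩

theorem sSup {c : Set (AddSubgroup ((G ⧸ H) × G))} (hc : ∀ L ∈ c, IsPartialSectionGraph L)
    (hchain : IsChain (· ≤ ·) c) (hne : c.Nonempty) : IsPartialSectionGraph (sSup c) := by
  have hmem x := AddSubgroup.mem_sSup_of_directedOn hne hchain.directedOn (x := x)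
  refine ⟨fun x hx => ?_, fun g hg => ?_⟩
  · obtain ⟨L, hLc, hxL⟩ := (hmem x).mp hx
    exact (hc L hLc).1 x hxL
  · obtain ⟨L, hLc, hgL⟩ := (hmem _).mp hg
    exact (hc L hLc).2 g hgL

theorem eq_of_mem (hL : IsPartialSectionGraph L) {q : G ⧸ H} {g g' : G} (hg : (q, g) ∈ L)
    (hg' : (q, g') ∈ L) : g = g' :=
  sub_eq_zero.mp (hL.2 _ (by simpa using L.sub_mem hg hg'))

theorem sup_zmultiples (hL : IsPartialSectionGraph L) {q : G ⧸ H} {g : G}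
    (hg : (g : G ⧸ H) = q) {m : ℕ}
    (hm : ∀ t : ℤ, t • q ∈ L.map (AddMonoidHom.fst _ G) ↔ (m : ℤ) ∣ t)
    (hmg : (m : ℤ) • (q, g) ∈ L) :
    IsPartialSectionGraph (L ⊔ AddSubgroup.zmultiples (q, g)) := by
  refine ⟨fun x hx => ?_, fun x hx => ?_⟩
  · obtain ⟨l, hl, _, ⟨t, rfl⟩, rfl⟩ := AddSubgroup.mem_sup.mp hx
    simp [hL.1 l hl, hg]
  · obtain ⟨l, hl, _, ⟨t, rfl⟩, hlt⟩ := AddSubgroup.mem_sup.mp hx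
    have htq : t • q ∈ L.map (AddMonoidHom.fst _ G) :=
      ⟨-l, L.neg_mem hl, by simpa [neg_eq_iff_add_eq_zero] using congrArg Prod.fst hlt⟩
    obtain ⟨u, rfl⟩ := (hm t).mp htq
    refine hL.2 x (hlt ▸ L.add_mem hl ?_)
    simpa [mul_comm, mul_smul] using L.zsmul_mem hmg u

theorem exists_mem_of_maximal (hL : Maximal IsPartialSectionGraph L) {q : G ⧸ H} {m : ℕ}
    (hmq : m • q = 0) (hdiv : Function.Surjective fun b : H => m • b) :
    ∃ g : G, (q, g) ∈ L := by
  obtain ⟨m₀, ⟨e, rfl⟩, hm₀⟩ := (L.map (AddMonoidHom.fst _ G)).exists_dvd_and_zsmul_mem_iff hmq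
  obtain ⟨x, hxL, hx⟩ := (hm₀ m₀).mpr dvd_rfl
  have hdiv₀ : Function.Surjective fun b : H => m₀ • b := fun a => by
    obtain ⟨b, rfl⟩ := hdiv a
    exact ⟨e • b, by simp only [← mul_nsmul']⟩
  obtain ⟨g, hgq, hgx⟩ := exists_mk_eq_and_nsmul_eq (q := q) (x := x.2)
    (by simpa [hL.prop.1 x hxL] using hx) hdiv₀
  have hmg : (m₀ : ℤ) • (q, g) ∈ L := by
    have hx' : (m₀ : ℤ) • (q, g) = x := Prod.ext (by simpa using hx.symm) (by simpa using hgx)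
    exact hx' ▸ hxL
  refine ⟨g, hL.2 (hL.prop.sup_zmultiples hgq hm₀ hmg) le_sup_left ?_⟩
  exact AddSubgroup.mem_sup_right (AddSubgroup.mem_zmultiples _)

end IsPartialSectionGraph

theorem QuotientAddGroup.exists_section_of_forall_nsmul_eq_zero
    (h : ∀ q : G ⧸ H, ∃ m : ℕ, m • q = 0 ∧ Function.Surjective fun b : H => m • b) :
    ∃ s : (G ⧸ H) →+ G, (mk' H).comp s = AddMonoidHom.id (G ⧸ H) := by
  obtain ⟨L, -, hL⟩ :=
    zorn_le_nonempty₀ {L : AddSubgroup ((G ⧸ H) × G) | IsPartialSectionGraph L}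
      (fun c hc hchain y hy => ⟨_, IsPartialSectionGraph.sSup hc hchain ⟨y, hy⟩,
        fun _ => le_sSup⟩) ⊥ IsPartialSectionGraph.bot
  have hsec (q : G ⧸ H) : ∃ g : G, (q, g) ∈ L := by
    obtain ⟨m, hmq, hdiv⟩ := h q
    exact IsPartialSectionGraph.exists_mem_of_maximal hL hmq hdiv
  choose s hs using hsec
  refine ⟨AddMonoidHom.mk' s fun q q' =>
    hL.prop.eq_of_mem (hs (q + q')) (L.add_mem (hs q) (hs q')), ?_⟩
  ext q
  exact hL.prop.1 _ (hs q)

theorem QuotientAddGroup.nonempty_addEquiv_prod_of_section (s : (G ⧸ H) →+ G)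
    (hs : (mk' H).comp s = AddMonoidHom.id (G ⧸ H)) : Nonempty (G ≃+ H × (G ⧸ H)) := by
  have hexact : Function.Exact H.subtype.toIntLinearMap (mk' H).toIntLinearMap := fun g => by
    simp [eq_zero_iff]
  exact ⟨(hexact.splitSurjectiveEquiv Subtype.val_injective
    ⟨s.toIntLinearMap, LinearMap.ext (DFunLike.congr_fun hs :)⟩).1.toAddEquiv⟩

theorem splitting_of_quotient_iso_ratSubgroupModZ_general
    (S : Set ℕ)
    (G : Type) [AddCommGroup G] (H : AddSubgroup G)
    (hiso : Nonempty ((G ⧸ H) ≃+ ratSubgroupModZ S))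
    (hdiv : ∀ p ∈ S, ∀ a : H, ∃ b : H, p • b = a) :
    (∃ s : (G ⧸ H) →+ G,
        (QuotientAddGroup.mk' H).comp s = AddMonoidHom.id (G ⧸ H)) ∧
      Nonempty (G ≃+ H × (G ⧸ H)) := by
  obtain ⟨e⟩ := hiso
  obtain ⟨s, hs⟩ := exists_section_of_forall_nsmul_eq_zero fun q => by
    obtain ⟨m, hm, hmq, hmS⟩ := ratSubgroupModZ.exists_nsmul_eq_zero S (e q)
    exact ⟨m, e.injective (by rw [map_nsmul, hmq, map_zero]),
      nsmul_surjective_of_primeFactors_subset hdiv hm hmS⟩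
  exact ⟨⟨s, hs⟩, nonempty_addEquiv_prod_of_section s hs⟩

/-- If `H ≤ G` with `G/H ≅ ℚ_S/ℤ` and `H` is `S`-divisible, then the quotient
map splits and `G ≅ H ⊕ G/H`. -/
theorem splitting_of_quotient_iso_ratSubgroupModZ
    (S : Set ℕ) (hS : ∀ p ∈ S, p.Prime)
    (G : Type) [AddCommGroup G] (H : AddSubgroup G)
    (hiso : Nonempty ((G ⧸ H) ≃+ ratSubgroupModZ S))
    (hdiv : ∀ p ∈ S, ∀ a : H, ∃ b : H, p • b = a) :
    (∃ s : (G ⧸ H) →+ G,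
        (QuotientAddGroup.mk' H).comp s = AddMonoidHom.id (G ⧸ H)) ∧
      Nonempty (G ≃+ H × (G ⧸ H)) :=
  splitting_of_quotient_iso_ratSubgroupModZ_general S G H hiso hdiv
end
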